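/- Let m ≥ 2 and let V be a free ℂ[[z]]-module of rank r with a connection ∇ of pole order m, encoded by D : V → V with D(a·v) = (z^m·da/dz)·v + a·D(v). The induced map D_m on V/z^mV is ℂ[z]/(z^m)-linear. Let p_j = a_{j,0} + a_{j,1}z + ⋯ + a_{j,m−1}z^{m−1} ∈ ℂ[z] for 0 ≤ j ≤ r−1 (encoding the polar forms ν_j = p_j·dz/z^m) and assume the leading coefficients a_{0,0}, a_{1,0}, …, a_{r−1,0} are pairwise distinct. Suppose V/z^mV admits a filtration V/z^mV = l_0 ⊃ l_1 ⊃ ⋯ ⊃ l_{r−1} ⊃ l_r = 0 by ℂ[z]/(z^m)-submodules with each l_j/l_{j+1} free of rank 1, D_m(l_j) ⊆ l_j for all j, and D_m acting on l_j/l_{j+1} as multiplication by p_j. Then (V,∇) ≅ V(ν_0,1) ⊕ V(ν_1,1) ⊕ ⋯ ⊕ V(ν_{r−1},1) as ℂ[[z]]-modules with connection. -/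

import Mathlib

noncomputable section

/-- Formal derivative of a power series over `ℂ`. -/
def psDeriv (f : PowerSeries ℂ) : PowerSeries ℂ :=
  PowerSeries.mk fun n => ((n : ℂ) + 1) * PowerSeries.coeff (n + 1) f

/-- `D` is a connection of pole order `m` on the free module `Fin r → ℂ⟦z⟧`,
written in the trivialization by the generator `dz/z^m`. -/
def IsConnection (m r : ℕ)
    (D : (Fin r → PowerSeries ℂ) → (Fin r → PowerSeries ℂ)) : Prop :=
  (∀ v w, D (v + w) = D v + D w) ∧
  ∀ (a : PowerSeries ℂ) (v : Fin r → PowerSeries ℂ),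
    D (a • v) = ((PowerSeries.X : PowerSeries ℂ) ^ m * psDeriv a) • v + a • D v

/-- The submodule `z^n·V ⊆ V = (Fin r → ℂ⟦z⟧)`. -/
def zPow (r n : ℕ) : Submodule (PowerSeries ℂ) (Fin r → PowerSeries ℂ) :=
  Submodule.pi Set.univ fun _ : Fin r =>
    (Ideal.span {(PowerSeries.X : PowerSeries ℂ) ^ n} : Ideal (PowerSeries ℂ))

/-!
Choosing generators `eᵢ` of the graded pieces `lᵢ/lᵢ₊₁` gives, by Nakayama, a frame of `V` in
which the connection matrix `B` is lower triangular modulo `z^m` with diagonal `p`. Since the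
leading coefficients `pᵢ(0)` are pairwise distinct, a unitriangular gauge transformation makes `B`
congruent to `diag p` modulo `z^m`. The gauge equation `z^m U' + B U = U diag p` is then solved
coefficient by coefficient: off the diagonal the leading term `(pᵢ(0) - pⱼ(0)) Uᵢⱼ` is invertible
and, because `m ≥ 2`, the term `z^m U'` only involves coefficients of lower degree; on the diagonal
the equation is integrated. In the resulting frame `∇` is diagonal, which is the decomposition
`V(ν₀,1) ⊕ ⋯ ⊕ V(ν_{r-1},1)`.
-/

open PowerSeries Matrix

theorem psDeriv_eq_derivative : psDeriv = d⁄dX ℂ := by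
  ext f n
  rw [psDeriv, coeff_mk, coeff_derivative]
  ring

def psInteg (f : ℂ⟦X⟧) : ℂ⟦X⟧ :=
  X * mk fun n => ((n : ℂ) + 1)⁻¹ * coeff n f

theorem psDeriv_psInteg (f : ℂ⟦X⟧) : psDeriv (psInteg f) = f := by
  ext n
  rw [psDeriv, coeff_mk, psInteg, coeff_succ_X_mul, coeff_mk, ← mul_assoc,
    mul_inv_cancel₀ (Nat.cast_add_one_ne_zero n), one_mul]

theorem constantCoeff_psInteg (f : ℂ⟦X⟧) : constantCoeff (psInteg f) = 0 := by
  simp [psInteg]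

theorem psInteg_sub (f g : ℂ⟦X⟧) : psInteg (f - g) = psInteg f - psInteg g := by
  unfold psInteg
  rw [← mul_sub]
  congr 1
  ext n
  simp [mul_sub]

theorem X_pow_succ_dvd_psInteg {n : ℕ} {f : ℂ⟦X⟧} (h : X ^ n ∣ f) : X ^ (n + 1) ∣ psInteg f := by
  rw [pow_succ', psInteg]
  refine mul_dvd_mul_left X (X_pow_dvd_iff.mpr fun k hk => ?_)
  rw [coeff_mk, X_pow_dvd_iff.mp h k hk, mul_zero]

theorem X_pow_succ_dvd_X_pow_mul_psDeriv {m n : ℕ} (hm : 2 ≤ m) {f : ℂ⟦X⟧} (h : X ^ n ∣ f) :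
    X ^ (n + 1) ∣ X ^ m * psDeriv f := by
  refine X_pow_dvd_iff.mpr fun k hk => ?_
  rw [coeff_X_pow_mul', psDeriv, coeff_mk]
  split_ifs with hmk
  · rw [X_pow_dvd_iff.mp h _ (by omega), mul_zero]
  · rfl

theorem span_X_pow_le_jacobson_bot {m : ℕ} (hm : m ≠ 0) :
    Ideal.span {(X : ℂ⟦X⟧) ^ m} ≤ Ideal.jacobson ⊥ := by
  rw [IsLocalRing.jacobson_eq_maximalIdeal ⊥ bot_ne_top, Ideal.span_le, Set.singleton_subset_iff,
    SetLike.mem_coe, IsLocalRing.mem_maximalIdeal, mem_nonunits_iff, isUnit_iff_constantCoeff]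
  simp [zero_pow hm]

theorem zPow_eq_smul_top (r n : ℕ) : zPow r n = Ideal.span {(X : ℂ⟦X⟧) ^ n} • ⊤ := by
  refine le_antisymm (fun v hv => ?_) (Submodule.smul_le.mpr fun a ha v _ t _ => ?_)
  · choose w hw using fun t => Ideal.mem_span_singleton.mp (hv t (Set.mem_univ t))
    rw [show v = (X : ℂ⟦X⟧) ^ n • w from funext hw]
    exact Submodule.smul_mem_smul (Ideal.mem_span_singleton_self _) Submodule.mem_top
  · exact Ideal.mul_mem_right _ _ ha

theorem Matrix.mulVec_eq_sum_smul_col {ι R : Type*} [Fintype ι] [CommSemiring R]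
    (M : Matrix ι ι R) (v : ι → R) : M *ᵥ v = ∑ k, v k • M.col k := by
  simp [mulVec_eq_sum, op_smul_eq_smul, col]

theorem Matrix.isUnit_det_of_top_le_span_col_sup {R : Type*} [CommRing R] {n : Type*} [Fintype n]
    [DecidableEq n] {I : Ideal R} (hI : I ≤ Ideal.jacobson ⊥) {G : Matrix n n R}
    (h : ⊤ ≤ Submodule.span R (Set.range G.col) ⊔ I • ⊤) : IsUnit G.det := by
  have hspan := Submodule.le_of_le_smul_of_le_jacobson_bot Module.Finite.fg_top hI h
  rw [← Matrix.range_mulVecLin, top_le_iff, LinearMap.range_eq_top] at hspan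
  exact (isUnit_iff_isUnit_det G).mp (mulVec_surjective_iff_isUnit.mp hspan)

section FixedPoint

variable {ι κ R : Type*} [Ring R]

def fixedPointCoeff (T : Matrix ι κ R⟦X⟧ → Matrix ι κ R⟦X⟧) (n : ℕ) : Matrix ι κ R :=
  Matrix.of fun i j => coeff n <| T (Matrix.of fun i' j' =>
    mk fun k => if k < n then fixedPointCoeff T k i' j' else 0) i j
termination_by n

theorem Matrix.exists_fixedPoint_of_X_pow_succ_dvd_sub (T : Matrix ι κ R⟦X⟧ → Matrix ι κ R⟦X⟧)
    (hT : ∀ A B n, (∀ i j, X ^ n ∣ A i j - B i j) → ∀ i j, X ^ (n + 1) ∣ T A i j - T B i j) :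
    ∃ A, T A = A := by
  refine ⟨Matrix.of fun i j => mk fun n => fixedPointCoeff T n i j, ?_⟩
  ext i j n
  have hagree : ∀ i j, X ^ n ∣ (Matrix.of fun i j => mk fun n => fixedPointCoeff T n i j) i j -
      (Matrix.of fun i' j' => mk fun k => if k < n then fixedPointCoeff T k i' j' else 0) i j :=
    fun i j => X_pow_dvd_iff.mpr fun k hk => by simp [hk]
  have := X_pow_dvd_iff.mp (hT _ _ n hagree i j) n n.lt_succ_self
  rw [map_sub, sub_eq_zero] at this
  rw [this, Matrix.of_apply, coeff_mk, fixedPointCoeff, Matrix.of_apply]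

end FixedPoint

namespace Matrix

variable {R : Type*} [CommRing R] {n : ℕ}

/-- Forward substitution for `B * x = B j j • x` with `x j = 1`; where `B j j - B i i` is not a
unit, `Ring.inverse` returns `0`. -/
def triangularEigenvector (B : Matrix (Fin n) (Fin n) R) (j i : Fin n) : R :=
  if i = j then 1
  else Ring.inverse (B j j - B i i) *
    ∑ k ∈ (Finset.Iio i).attach, B i k * triangularEigenvector B j k
termination_by i.val
decreasing_by exact Fin.lt_def.mp (Finset.mem_Iio.mp k.2)

variable (B : Matrix (Fin n) (Fin n) R)

theorem triangularEigenvector_eq (j i : Fin n) :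
    triangularEigenvector B j i = if i = j then 1
      else Ring.inverse (B j j - B i i) *
        ∑ k ∈ Finset.Iio i, B i k * triangularEigenvector B j k := by
  rw [triangularEigenvector,
    Finset.sum_attach (Finset.Iio i) fun k => B i k * triangularEigenvector B j k]

theorem triangularEigenvector_of_lt {j i : Fin n} (h : i < j) :
    triangularEigenvector B j i = 0 := by
  induction i using WellFoundedLT.induction with
  | ind i ih =>
    rw [triangularEigenvector_eq, if_neg h.ne, Finset.sum_eq_zero fun k hk => ?_, mul_zero]
    rw [ih k (Finset.mem_Iio.mp hk) ((Finset.mem_Iio.mp hk).trans h), mul_zero]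

theorem triangularEigenvector_self (j : Fin n) : triangularEigenvector B j j = 1 := by
  rw [triangularEigenvector_eq, if_pos rfl]

variable {B}

theorem sum_mul_triangularEigenvector (hB : B.IsLowerTriangular)
    (hdiag : Pairwise fun i j => IsUnit (B i i - B j j)) (j i : Fin n) :
    ∑ k, B i k * triangularEigenvector B j k = B j j * triangularEigenvector B j i := by
  have hsplit : ∑ k, B i k * triangularEigenvector B j k =
      B i i * triangularEigenvector B j i +
        ∑ k ∈ Finset.Iio i, B i k * triangularEigenvector B j k := by
    rw [← Finset.sum_subset (Finset.subset_univ (Finset.Iic i)) fun k _ hk => ?_,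
      Finset.Iic_eq_cons_Iio, Finset.sum_cons]
    rw [hB (OrderDual.toDual_lt_toDual.mpr (not_le.mp (Finset.mem_Iic.not.mp hk))), zero_mul]
  rw [hsplit]
  rcases eq_or_ne i j with rfl | hij
  · rw [Finset.sum_eq_zero fun k hk => by
      rw [triangularEigenvector_of_lt B (Finset.mem_Iio.mp hk), mul_zero], add_zero]
  · have hv : (B j j - B i i) * triangularEigenvector B j i =
        ∑ k ∈ Finset.Iio i, B i k * triangularEigenvector B j k := by
      rw [triangularEigenvector_eq B j i, if_neg hij, ← mul_assoc,
        Ring.mul_inverse_cancel _ (hdiag hij.symm), one_mul]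
    linear_combination -hv

theorem exists_det_eq_one_mul_eq_mul_diagonal (hB : B.IsLowerTriangular)
    (hdiag : Pairwise fun i j => IsUnit (B i i - B j j)) :
    ∃ U : Matrix (Fin n) (Fin n) R, U.det = 1 ∧ B * U = U * diagonal fun i => B i i := by
  refine ⟨of fun i j => triangularEigenvector B j i, ?_, ?_⟩
  · rw [det_of_isLowerTriangular (of fun i j => triangularEigenvector B j i)
      fun i j h => triangularEigenvector_of_lt B (OrderDual.toDual_lt_toDual.mp h)]
    exact Finset.prod_eq_one fun i _ => triangularEigenvector_self B i
  · ext i j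
    rw [mul_apply, mul_diagonal, of_apply, mul_comm]
    exact sum_mul_triangularEigenvector hB hdiag j i

end Matrix

theorem antitoneOn_nat_Iic_of_succ_le {α : Type*} [Preorder α] {f : ℕ → α} {r : ℕ}
    (hf : ∀ n < r, f (n + 1) ≤ f n) : AntitoneOn f (Set.Iic r) := fun s _ t ht hst => by
  induction t, hst using Nat.le_induction with
  | base => exact le_rfl
  | succ t _ ih => exact (hf t ht).trans (ih (Nat.le_of_succ_le ht))

section Filtration

variable {R M : Type*} [CommRing R] [AddCommGroup M] [Module R M] {r : ℕ}
  {l : ℕ → Submodule R M} {e : Fin r → M}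

theorem le_span_range_sup (hspan : ∀ i : Fin r, l i ≤ R ∙ e i ⊔ l (i + 1)) {t : ℕ}
    (ht : t ≤ r) : l t ≤ Submodule.span R (Set.range e) ⊔ l r := by
  induction ht using Nat.decreasingInduction with
  | self => exact le_sup_right
  | of_succ t ht ih =>
    refine (hspan ⟨t, ht⟩).trans (sup_le (le_sup_of_le_left ?_) ih)
    exact Submodule.span_mono (Set.singleton_subset_iff.mpr (Set.mem_range_self _))

theorem mem_of_sum_smul_mem {I : Ideal R} (hmono : ∀ j < r, l (j + 1) ≤ l j) (hI : I • ⊤ ≤ l r)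
    (he : ∀ i : Fin r, e i ∈ l i) (hfree : ∀ (i : Fin r) (a : R), a • e i ∈ l (i + 1) → a ∈ I)
    {t : ℕ} (ht : t ≤ r) {c : Fin r → R} (hc : ∑ i, c i • e i ∈ l t) (i : Fin r)
    (hi : (i : ℕ) < t) : c i ∈ I := by
  induction t generalizing i with
  | zero => exact absurd hi (Nat.not_lt_zero _)
  | succ t ih =>
    have hlt : ∀ k : Fin r, (k : ℕ) < t → c k ∈ I :=
      fun k => ih (by omega) (hmono t (by omega) hc) k
    rcases Nat.lt_succ_iff_lt_or_eq.mp hi with hi | hi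
    · exact hlt i hi
    refine hfree i (c i) (hi ▸ ?_)
    have hrest : ∑ k ∈ Finset.univ.erase i, c k • e k ∈ l (t + 1) := by
      refine Submodule.sum_mem _ fun k hk => ?_
      rcases lt_or_gt_of_ne (Fin.val_ne_of_ne (Finset.ne_of_mem_erase hk)) with hk | hk
      · exact antitoneOn_nat_Iic_of_succ_le hmono (Set.mem_Iic.mpr ht) (Set.mem_Iic.mpr le_rfl) ht
          (hI (Submodule.smul_mem_smul (hlt k (hi ▸ hk)) Submodule.mem_top))
      · exact Submodule.smul_mem _ _ (antitoneOn_nat_Iic_of_succ_le hmono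
          (Set.mem_Iic.mpr ht) (Set.mem_Iic.mpr k.2.le) (hi ▸ hk) (he k))
    have := Submodule.sub_mem _ hc hrest
    rwa [← Finset.add_sum_erase _ _ (Finset.mem_univ i), add_sub_cancel_right] at this

end Filtration

section ConnectionMatrix

variable {r m : ℕ} {D : (Fin r → ℂ⟦X⟧) → (Fin r → ℂ⟦X⟧)}

def IsConnectionMatrix (D : (Fin r → ℂ⟦X⟧) → (Fin r → ℂ⟦X⟧))
    (M B : Matrix (Fin r) (Fin r) ℂ⟦X⟧) : Prop :=
  ∀ k, D (M.col k) = (M * B).col k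

theorem isConnectionMatrix_nonsing_inv_mul {M : Matrix (Fin r) (Fin r) ℂ⟦X⟧} (hM : IsUnit M.det) :
    IsConnectionMatrix D M (M⁻¹ * Matrix.of fun i k => D (M.col k) i) := fun k => by
  rw [mul_nonsing_inv_cancel_left _ _ hM]
  rfl

theorem IsConnection.map_mulVec (hD : IsConnection m r D) {M B : Matrix (Fin r) (Fin r) ℂ⟦X⟧}
    (hMB : IsConnectionMatrix D M B) (a : Fin r → ℂ⟦X⟧) :
    D (M *ᵥ a) = M *ᵥ ((X : ℂ⟦X⟧) ^ m • (psDeriv ∘ a) + B *ᵥ a) := by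
  have hsum := map_sum (AddMonoidHom.mk' D hD.1) (fun k => a k • M.col k) Finset.univ
  simp only [AddMonoidHom.mk'_apply] at hsum
  rw [mulVec_add, mulVec_mulVec, mulVec_eq_sum_smul_col, mulVec_eq_sum_smul_col,
    mulVec_eq_sum_smul_col, ← Finset.sum_add_distrib, hsum]
  refine Finset.sum_congr rfl fun k _ => ?_
  rw [hD.2, hMB k]
  rfl

theorem IsConnection.isConnectionMatrix_mul (hD : IsConnection m r D)
    {M B U B' : Matrix (Fin r) (Fin r) ℂ⟦X⟧} (hMB : IsConnectionMatrix D M B)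
    (hU : (X : ℂ⟦X⟧) ^ m • U.map psDeriv + B * U = U * B') :
    IsConnectionMatrix D (M * U) B' := fun k => by
  rw [Matrix.mul_assoc, ← hU]
  exact hD.map_mulVec hMB (U.col k)

theorem IsConnection.exists_linearEquiv_of_isConnectionMatrix_diagonal (hD : IsConnection m r D)
    {M : Matrix (Fin r) (Fin r) ℂ⟦X⟧} (hM : IsUnit M.det) {q : Fin r → ℂ⟦X⟧}
    (hMq : IsConnectionMatrix D M (diagonal q)) :
    ∃ Φ : (Fin r → ℂ⟦X⟧) ≃ₗ[ℂ⟦X⟧] (Fin r → ℂ⟦X⟧),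
      ∀ v, Φ (D v) = fun i => X ^ m * psDeriv (Φ v i) + q i * Φ v i := by
  refine ⟨(M.toLinearEquiv' (M.invertibleOfIsUnitDet hM)).symm, fun v => ?_⟩
  set Φ := (M.toLinearEquiv' (M.invertibleOfIsUnitDet hM)).symm
  have hΦ : ∀ a, Φ.symm a = M *ᵥ a := fun _ => rfl
  obtain ⟨a, rfl⟩ := Φ.symm.surjective v
  rw [Φ.apply_symm_apply, hΦ, hD.map_mulVec hMq, ← hΦ, Φ.apply_symm_apply]
  ext i : 1
  rw [Pi.add_apply, mulVec_diagonal]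
  rfl

theorem IsConnectionMatrix.apply_col_sub_smul_col {M B : Matrix (Fin r) (Fin r) ℂ⟦X⟧}
    (hMB : IsConnectionMatrix D M B) (q : Fin r → ℂ⟦X⟧)
    (k : Fin r) : D (M.col k) - q k • M.col k = ∑ i, (B - diagonal q) i k • M.col i := by
  rw [hMB k, ← mulVec_eq_sum_smul_col]
  ext t
  simp [mulVec, dotProduct, Matrix.mul_apply, mul_sub, Finset.sum_sub_distrib, diagonal_apply,
    mul_comm]

end ConnectionMatrix

theorem exists_diagonalizing_mod_X_pow {r m : ℕ} (hm : m ≠ 0) {p : Fin r → ℂ⟦X⟧}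
    (hp : Pairwise fun i j => constantCoeff (p i) ≠ constantCoeff (p j))
    {B : Matrix (Fin r) (Fin r) ℂ⟦X⟧} (hB : ∀ i j, i ≤ j → X ^ m ∣ B i j - diagonal p i j) :
    ∃ U : Matrix (Fin r) (Fin r) ℂ⟦X⟧, IsUnit U.det ∧
      ∀ i j, X ^ m ∣ (B * U - U * diagonal p) i j := by
  set π := Ideal.Quotient.mk (Ideal.span {(X : ℂ⟦X⟧) ^ m})
  have hπ : ∀ f g, π f = π g ↔ X ^ m ∣ f - g := fun f g => by
    rw [Ideal.Quotient.eq, Ideal.mem_span_singleton]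
  have hBπ : ∀ i j, i ≤ j → π (B i j) = π (diagonal p i j) :=
    fun i j h => (hπ _ _).mpr (hB i j h)
  have hlow : (B.map π).IsLowerTriangular := fun i j h => by
    have hij := OrderDual.toDual_lt_toDual.mp h
    rw [map_apply, hBπ i j hij.le, diagonal_apply_ne _ hij.ne, map_zero]
  have hdiag : (diagonal fun i => B.map π i i) = (diagonal p).map π := by
    rw [diagonal_map (map_zero π)]
    exact congrArg diagonal (funext fun i => (hBπ i i le_rfl).trans (by rw [diagonal_apply_eq]))
  have hunit : Pairwise fun i j => IsUnit (B.map π i i - B.map π j j) := fun i j hij => by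
    change IsUnit (π (B i i) - π (B j j))
    rw [hBπ i i le_rfl, hBπ j j le_rfl, diagonal_apply_eq, diagonal_apply_eq, ← map_sub]
    refine IsUnit.map π (isUnit_iff_constantCoeff.mpr ?_)
    rw [map_sub]
    exact (sub_ne_zero.mpr (hp hij)).isUnit
  obtain ⟨Ū, hŪdet, hŪ⟩ := (B.map π).exists_det_eq_one_mul_eq_mul_diagonal hlow hunit
  set U := Ū.map (Function.surjInv Ideal.Quotient.mk_surjective)
  have hU : U.map π = Ū := by
    ext i j
    exact Function.surjInv_eq _ _
  refine ⟨U, ?_, fun i j => (hπ _ _).mp ?_⟩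
  · have := isLocalHom_of_le_jacobson_bot _ (span_X_pow_le_jacobson_bot hm)
    rw [← isUnit_map_iff π, RingHom.map_det, RingHom.mapMatrix_apply, hU, hŪdet]
    exact isUnit_one
  · have : (B * U).map π = (U * diagonal p).map π := by
      rw [Matrix.map_mul, Matrix.map_mul, hU, hŪ, hdiag]
    exact congrFun (congrFun this i) j

theorem exists_gauge_mod_X_pow_of_diagonalizing {r m : ℕ} {p : Fin r → ℂ⟦X⟧}
    {B U : Matrix (Fin r) (Fin r) ℂ⟦X⟧} (hU : IsUnit U.det)
    (hBU : ∀ i j, X ^ m ∣ (B * U - U * diagonal p) i j) :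
    ∃ B' : Matrix (Fin r) (Fin r) ℂ⟦X⟧, (X : ℂ⟦X⟧) ^ m • U.map psDeriv + B * U = U * B' ∧
      ∀ i j, X ^ m ∣ B' i j - diagonal p i j := by
  refine ⟨U⁻¹ * ((X : ℂ⟦X⟧) ^ m • U.map psDeriv + B * U),
    (mul_nonsing_inv_cancel_left _ _ hU).symm, fun i j => ?_⟩
  have : U⁻¹ * ((X : ℂ⟦X⟧) ^ m • U.map psDeriv + B * U) - diagonal p =
      U⁻¹ * ((X : ℂ⟦X⟧) ^ m • U.map psDeriv + (B * U - U * diagonal p)) := by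
    rw [Matrix.mul_add, Matrix.mul_add, Matrix.mul_sub, nonsing_inv_mul_cancel_left _ _ hU]
    abel
  rw [← Matrix.sub_apply, this, mul_apply]
  exact Finset.dvd_sum fun k _ => dvd_mul_of_dvd_right (dvd_add (dvd_mul_right _ _) (hBU k j)) _

section FormalReduction

variable {r : ℕ} (m : ℕ) (p : Fin r → ℂ⟦X⟧) (S : Matrix (Fin r) (Fin r) ℂ⟦X⟧)

/-- Entry `(i, j)` of `X ^ m • A.map psDeriv + (diagonal p + X ^ m • S) * A = A * diagonal p`
reads `X^m A'ᵢⱼ + (pᵢ - pⱼ) Aᵢⱼ + X^m (S A)ᵢⱼ = 0`. Off the diagonal it is solved for `Aᵢⱼ`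
through the unit `pᵢ(0) - pⱼ(0)`; on the diagonal it is integrated with `Aᵢᵢ(0) = 1`. -/
def reductionMap (A : Matrix (Fin r) (Fin r) ℂ⟦X⟧) : Matrix (Fin r) (Fin r) ℂ⟦X⟧ :=
  Matrix.of fun i j =>
    if i = j then 1 - psInteg ((S * A) i i)
    else C (constantCoeff (p i) - constantCoeff (p j))⁻¹ *
      ((C (constantCoeff (p i) - constantCoeff (p j)) - (p i - p j)) * A i j -
        X ^ m * (psDeriv (A i j) + (S * A) i j))

variable {m p S}

theorem X_pow_succ_dvd_reductionMap_sub (hm : 2 ≤ m) {A B : Matrix (Fin r) (Fin r) ℂ⟦X⟧}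
    {n : ℕ} (h : ∀ i j, X ^ n ∣ A i j - B i j) (i j : Fin r) :
    X ^ (n + 1) ∣ reductionMap m p S A i j - reductionMap m p S B i j := by
  have hSAB : ∀ i j, X ^ n ∣ (S * A) i j - (S * B) i j := fun i j => by
    rw [← Matrix.sub_apply, ← Matrix.mul_sub, Matrix.mul_apply]
    exact Finset.dvd_sum fun k _ => (h k j).mul_left _
  simp only [reductionMap, Matrix.of_apply]
  split_ifs with hij
  · rw [sub_sub_sub_cancel_left, ← psInteg_sub]
    exact X_pow_succ_dvd_psInteg (dvd_sub_comm.mp (hSAB i i))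
  · set δ := constantCoeff (p i) - constantCoeff (p j)
    have hX : X ∣ C δ - (p i - p j) := by simp [X_dvd_iff, δ]
    have hm' : X ^ (n + 1) ∣ X ^ m * ((S * A) i j - (S * B) i j) := by
      rw [pow_succ']
      exact mul_dvd_mul (dvd_pow_self X (by omega)) (hSAB i j)
    rw [← mul_sub]
    refine dvd_mul_of_dvd_right ?_ _
    have : (C δ - (p i - p j)) * A i j - X ^ m * (psDeriv (A i j) + (S * A) i j) -
        ((C δ - (p i - p j)) * B i j - X ^ m * (psDeriv (B i j) + (S * B) i j)) =
        (C δ - (p i - p j)) * (A i j - B i j) - X ^ m * psDeriv (A i j - B i j) -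
          X ^ m * ((S * A) i j - (S * B) i j) := by
      rw [psDeriv_eq_derivative, (derivative ℂ).map_sub]; ring
    have hq : X ^ (n + 1) ∣ (C δ - (p i - p j)) * (A i j - B i j) := by
      rw [pow_succ']
      exact mul_dvd_mul hX (h i j)
    rw [this]
    exact dvd_sub (dvd_sub hq (X_pow_succ_dvd_X_pow_mul_psDeriv hm (h i j))) hm'

theorem gauge_eq_of_reductionMap_eq
    (hp : Pairwise fun i j => constantCoeff (p i) ≠ constantCoeff (p j))
    {A : Matrix (Fin r) (Fin r) ℂ⟦X⟧} (hA : reductionMap m p S A = A) :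
    (X : ℂ⟦X⟧) ^ m • A.map psDeriv + (diagonal p + (X : ℂ⟦X⟧) ^ m • S) * A = A * diagonal p := by
  refine Matrix.ext fun i j => ?_
  have hAij := congrFun (congrFun hA i) j
  simp only [reductionMap, Matrix.of_apply] at hAij
  simp only [Matrix.add_apply, Matrix.smul_apply, Matrix.map_apply, smul_eq_mul, Matrix.add_mul,
    Matrix.diagonal_mul, Matrix.smul_mul, Matrix.mul_diagonal]
  split_ifs at hAij with hij
  · subst hij
    have hderiv : psDeriv (A i i) = -(S * A) i i := by
      rw [← hAij, psDeriv_eq_derivative, (derivative ℂ).map_sub, derivative_one,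
        ← psDeriv_eq_derivative, psDeriv_psInteg, zero_sub]
    rw [hderiv]
    ring
  · set δ := constantCoeff (p i) - constantCoeff (p j)
    have hδ : (C δ : ℂ⟦X⟧) * C δ⁻¹ = 1 := by
      rw [← map_mul, mul_inv_cancel₀ (sub_ne_zero.mpr (hp hij)), map_one]
    linear_combination -(C δ : ℂ⟦X⟧) * hAij +
      ((C δ - (p i - p j)) * A i j - (X : ℂ⟦X⟧) ^ m * (psDeriv (A i j) + (S * A) i j)) * hδ

theorem map_constantCoeff_reductionMap (hm : m ≠ 0) (A : Matrix (Fin r) (Fin r) ℂ⟦X⟧) :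
    (reductionMap m p S A).map constantCoeff = 1 := by
  ext i j
  simp only [reductionMap, Matrix.map_apply, Matrix.of_apply, Matrix.one_apply]
  split_ifs with hij
  · rw [map_sub, map_one, constantCoeff_psInteg, sub_zero]
  · simp [zero_pow hm]

theorem exists_gauge_to_diagonal (hm : 2 ≤ m)
    (hp : Pairwise fun i j => constantCoeff (p i) ≠ constantCoeff (p j))
    {B : Matrix (Fin r) (Fin r) ℂ⟦X⟧} (hB : ∀ i j, X ^ m ∣ B i j - diagonal p i j) :
    ∃ U : Matrix (Fin r) (Fin r) ℂ⟦X⟧,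
      IsUnit U.det ∧ (X : ℂ⟦X⟧) ^ m • U.map psDeriv + B * U = U * diagonal p := by
  choose S hS using hB
  have hBS : B = diagonal p + (X : ℂ⟦X⟧) ^ m • Matrix.of S := by
    ext i j
    simp [← hS]
  obtain ⟨A, hA⟩ := Matrix.exists_fixedPoint_of_X_pow_succ_dvd_sub (reductionMap m p (Matrix.of S))
    fun _ _ _ h => X_pow_succ_dvd_reductionMap_sub hm h
  refine ⟨A, ?_, hBS ▸ gauge_eq_of_reductionMap_eq hp hA⟩
  rw [isUnit_iff_constantCoeff, RingHom.map_det, RingHom.mapMatrix_apply, ← hA,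
    map_constantCoeff_reductionMap (by omega), Matrix.det_one]
  exact isUnit_one

end FormalReduction

theorem exists_frame_of_filtration {r m : ℕ} (hm : m ≠ 0) {D : (Fin r → ℂ⟦X⟧) → (Fin r → ℂ⟦X⟧)}
    {p : Fin r → ℂ⟦X⟧} {l : ℕ → Submodule ℂ⟦X⟧ (Fin r → ℂ⟦X⟧)} (hl0 : l 0 = ⊤)
    (hlr : l r = zPow r m) (hmono : ∀ j < r, l (j + 1) ≤ l j) {e : Fin r → Fin r → ℂ⟦X⟧}
    (he : ∀ i : Fin r, e i ∈ l i) (hspan : ∀ i : Fin r, l i ≤ ℂ⟦X⟧ ∙ e i ⊔ l (i + 1))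
    (hfree : ∀ (i : Fin r) (a : ℂ⟦X⟧), a • e i ∈ l (i + 1) → X ^ m ∣ a)
    (heig : ∀ i : Fin r, D (e i) - p i • e i ∈ l (i + 1)) :
    ∃ G B : Matrix (Fin r) (Fin r) ℂ⟦X⟧, IsUnit G.det ∧ IsConnectionMatrix D G B ∧
      ∀ i k, i ≤ k → X ^ m ∣ B i k - diagonal p i k := by
  have hlr' : l r = Ideal.span {(X : ℂ⟦X⟧) ^ m} • ⊤ := hlr.trans (zPow_eq_smul_top r m)
  set G : Matrix (Fin r) (Fin r) ℂ⟦X⟧ := Matrix.of fun t i => e i t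
  have hG : IsUnit G.det := by
    have := le_span_range_sup hspan r.zero_le
    rw [hl0, hlr'] at this
    exact isUnit_det_of_top_le_span_col_sup (span_X_pow_le_jacobson_bot hm) this
  have hB := isConnectionMatrix_nonsing_inv_mul (D := D) hG
  refine ⟨G, _, hG, hB, fun i k hik => Ideal.mem_span_singleton.mp ?_⟩
  have hsum := hB.apply_col_sub_smul_col p k ▸ heig k
  exact mem_of_sum_smul_mem hmono hlr'.ge he
    (fun i a h => Ideal.mem_span_singleton.mpr (hfree i a h)) k.2 hsum i (Nat.lt_succ_of_le hik)

theorem generic_exponents_decomposition_general (r m : ℕ) (hm : 2 ≤ m)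
    (D : (Fin r → PowerSeries ℂ) → (Fin r → PowerSeries ℂ))
    (hD : IsConnection m r D)
    (p : ℕ → PowerSeries ℂ)
    (hdist : ∀ j₁ < r, ∀ j₂ < r, j₁ ≠ j₂ →
      PowerSeries.constantCoeff (p j₁) ≠ PowerSeries.constantCoeff (p j₂))
    (l : ℕ → Submodule (PowerSeries ℂ) (Fin r → PowerSeries ℂ))
    (hl0 : l 0 = ⊤) (hlr : l r = zPow r m)
    (hmono : ∀ j < r, l (j + 1) ≤ l j)
    (hfree : ∀ j < r, ∃ e ∈ l j,
      l j = Submodule.span (PowerSeries ℂ) {e} ⊔ l (j + 1) ∧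
      ∀ a : PowerSeries ℂ, a • e ∈ l (j + 1) → (PowerSeries.X : PowerSeries ℂ) ^ m ∣ a)
    (heig : ∀ j < r, ∀ v ∈ l j, D v - p j • v ∈ l (j + 1)) :
    ∃ Φ : (Fin r → PowerSeries ℂ) ≃ₗ[PowerSeries ℂ] (Fin r → PowerSeries ℂ),
      ∀ v, Φ (D v) = fun i : Fin r =>
        (PowerSeries.X : PowerSeries ℂ) ^ m * psDeriv (Φ v i) + p (i : ℕ) * Φ v i := by
  choose e he hspan hfree using hfree
  have hp : Pairwise fun i j : Fin r => constantCoeff (p i) ≠ constantCoeff (p j) :=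
    fun i j hij => hdist i i.2 j j.2 (Fin.val_ne_of_ne hij)
  obtain ⟨G, B, hG, hGB, hB⟩ := exists_frame_of_filtration (by omega) hl0 hlr hmono
    (fun i => he i i.2) (fun i => (hspan i i.2).le) (fun i => hfree i i.2)
    (fun i => heig i i.2 _ (he i i.2))
  obtain ⟨U, hU, hBU⟩ := exists_diagonalizing_mod_X_pow (by omega) hp hB
  obtain ⟨B', hUB, hB'⟩ := exists_gauge_mod_X_pow_of_diagonalizing hU hBU
  obtain ⟨V, hV, hVB'⟩ := exists_gauge_to_diagonal hm hp hB'
  refine hD.exists_linearEquiv_of_isConnectionMatrix_diagonal ?_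
    (hD.isConnectionMatrix_mul (hD.isConnectionMatrix_mul hGB hUB) hVB')
  rw [det_mul, det_mul]
  exact (hG.mul hU).mul hV

/-- **Generic exponents force the unramified decomposition.** Let `∇` be a
connection of pole order `m ≥ 2` on a free `ℂ⟦z⟧`-module `V` of rank `r`, and let
`ν_j = p_j·dz/z^m` (with `p j` of degree `< m`) have pairwise distinct leading
coefficients `a_{j,0} = p_j(0)`. If `V/z^m V` carries a filtration (given here by
its preimage `l j ⊇ z^m·V` in `V`) with free rank-one graded pieces over
`ℂ[z]/(z^m)`, stable under the induced `ℂ[z]/(z^m)`-linear map `D_m`, on whose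
`j`-th graded piece `D_m` acts as multiplication by `p j`, then
`(V, ∇) ≅ V(ν_0,1) ⊕ ⋯ ⊕ V(ν_{r-1},1)` as modules with connection. -/
theorem generic_exponents_decomposition (r m : ℕ) (hr : 1 ≤ r) (hm : 2 ≤ m)
    (D : (Fin r → PowerSeries ℂ) → (Fin r → PowerSeries ℂ))
    (hD : IsConnection m r D)
    (p : ℕ → PowerSeries ℂ)
    (hpbd : ∀ j < r, ∀ t, m ≤ t → PowerSeries.coeff t (p j) = 0)
    (hdist : ∀ j₁ < r, ∀ j₂ < r, j₁ ≠ j₂ →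
      PowerSeries.constantCoeff (p j₁) ≠ PowerSeries.constantCoeff (p j₂))
    (l : ℕ → Submodule (PowerSeries ℂ) (Fin r → PowerSeries ℂ))
    (hl0 : l 0 = ⊤) (hlr : l r = zPow r m)
    (hmono : ∀ j < r, l (j + 1) ≤ l j)
    (hstab : ∀ j < r, ∀ v ∈ l j, D v ∈ l j)
    (hfree : ∀ j < r, ∃ e ∈ l j,
      l j = Submodule.span (PowerSeries ℂ) {e} ⊔ l (j + 1) ∧
      ∀ a : PowerSeries ℂ, a • e ∈ l (j + 1) → (PowerSeries.X : PowerSeries ℂ) ^ m ∣ a)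
    (heig : ∀ j < r, ∀ v ∈ l j, D v - p j • v ∈ l (j + 1)) :
    ∃ Φ : (Fin r → PowerSeries ℂ) ≃ₗ[PowerSeries ℂ] (Fin r → PowerSeries ℂ),
      ∀ v, Φ (D v) = fun i : Fin r =>
        (PowerSeries.X : PowerSeries ℂ) ^ m * psDeriv (Φ v i) + p (i : ℕ) * Φ v i :=
  generic_exponents_decomposition_general r m hm D hD p hdist l hl0 hlr hmono hfree heig
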